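/- Let X be a Hermitian d×d matrix and P an orthogonal projection such that ‖X‖_{S1} ≤ 1, Tr(X⁻) ≤ δ, and Tr(PX) ≥ ‖X‖_{S1} − δ for some 0 ≤ δ ≤ 1. Then ‖PXP − X‖_{S1} ≤ C√δ for a universal constant C. -/

import Mathlib

/-!
Put `Q = 1 - P` and write `X⁺ = BᴴB`, `X⁻ = CᴴC`. Then `PXP - X = -(QXQ + QXP + PXQ)`.
The trace norm of a Hermitian matrix `A` is `Re Tr(W A)` for the unitary `W = sign A`, and by
Cauchy–Schwarz for the Frobenius inner product `|Re Tr(W R X⁺ R')| ≤ √Tr(R X⁺) √Tr(R' X⁺)` for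
projections `R, R'` (similarly for `X⁻`). The hypotheses say that `Tr(Q X⁺)` and `Tr X⁻` are at
most `δ`, so the corner `QXQ` costs `O(δ)` and the off-diagonal blocks cost `O(√δ)`.
-/

open Matrix ComplexOrder

/-- The Frobenius norm of a complex square matrix: `(Tr(AᴴA))^{1/2}`. -/
noncomputable def frobNorm {d : ℕ} (A : Matrix (Fin d) (Fin d) ℂ) : ℝ :=
  Real.sqrt ((Aᴴ * A).trace.re)

/-- The Schatten-1 (nuclear) norm: the sum of singular values, i.e. `Tr((AᴴA)^{1/2})`. -/
noncomputable def nucNorm {d : ℕ} (A : Matrix (Fin d) (Fin d) ℂ) : ℝ :=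
  ((((Matrix.posSemidef_conjTranspose_mul_self A).1.eigenvectorUnitary : Matrix (Fin d) (Fin d) ℂ) *
      Matrix.diagonal (fun i => ((Real.sqrt ((Matrix.posSemidef_conjTranspose_mul_self A).1.eigenvalues i) : ℝ) : ℂ)) *
      (star (Matrix.posSemidef_conjTranspose_mul_self A).1.eigenvectorUnitary :
        Matrix (Fin d) (Fin d) ℂ))).trace.re


/-- The positive part `X⁺` of a Hermitian matrix, via the spectral decomposition. -/
noncomputable def posPart {d : ℕ} {X : Matrix (Fin d) (Fin d) ℂ} (hX : X.IsHermitian) :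
    Matrix (Fin d) (Fin d) ℂ :=
  (hX.eigenvectorUnitary : Matrix (Fin d) (Fin d) ℂ) *
    Matrix.diagonal (fun i => ((max (hX.eigenvalues i) 0 : ℝ) : ℂ)) *
    (hX.eigenvectorUnitary : Matrix (Fin d) (Fin d) ℂ)ᴴ

/-- The negative part `X⁻` of a Hermitian matrix, via the spectral decomposition,
so that `X = X⁺ - X⁻`. -/
noncomputable def negPart {d : ℕ} {X : Matrix (Fin d) (Fin d) ℂ} (hX : X.IsHermitian) :
    Matrix (Fin d) (Fin d) ℂ :=
  (hX.eigenvectorUnitary : Matrix (Fin d) (Fin d) ℂ) *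
    Matrix.diagonal (fun i => ((max (-hX.eigenvalues i) 0 : ℝ) : ℂ)) *
    (hX.eigenvectorUnitary : Matrix (Fin d) (Fin d) ℂ)ᴴ

variable {d : ℕ}

theorem frobNorm_nonneg (A : Matrix (Fin d) (Fin d) ℂ) : 0 ≤ frobNorm A := Real.sqrt_nonneg _

theorem sq_frobNorm (A : Matrix (Fin d) (Fin d) ℂ) : frobNorm A ^ 2 = (Aᴴ * A).trace.re :=
  Real.sq_sqrt (Complex.nonneg_iff.mp (posSemidef_conjTranspose_mul_self A).trace_nonneg).1

theorem abs_re_trace_conjTranspose_mul_le (A B : Matrix (Fin d) (Fin d) ℂ) :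
    |(Aᴴ * B).trace.re| ≤ frobNorm A * frobNorm B := by
  let := toMatrixSeminormedAddCommGroup (1 : Matrix (Fin d) (Fin d) ℂ) PosSemidef.one
  let := toMatrixInnerProductSpace (1 : Matrix (Fin d) (Fin d) ℂ) PosSemidef.one
  have hinner (C D : Matrix (Fin d) (Fin d) ℂ) : inner ℂ C D = (Cᴴ * D).trace := by
    change (D * 1 * Cᴴ).trace = _
    rw [Matrix.mul_one, trace_mul_comm]
  have hnorm (C : Matrix (Fin d) (Fin d) ℂ) : ‖C‖ = frobNorm C := by
    rw [norm_eq_sqrt_re_inner (𝕜 := ℂ), hinner]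
    rfl
  calc |(Aᴴ * B).trace.re| ≤ ‖inner ℂ A B‖ := hinner A B ▸ Complex.abs_re_le_norm _
    _ ≤ ‖A‖ * ‖B‖ := norm_inner_le_norm A B
    _ = frobNorm A * frobNorm B := by rw [hnorm, hnorm]

theorem frobNorm_unitary_mul {W : Matrix (Fin d) (Fin d) ℂ} (hW : W ∈ unitary _)
    (A : Matrix (Fin d) (Fin d) ℂ) : frobNorm (W * A) = frobNorm A := by
  rw [frobNorm, frobNorm, conjTranspose_mul, Matrix.mul_assoc, ← Matrix.mul_assoc Wᴴ,
    ← star_eq_conjTranspose W, Unitary.star_mul_self_of_mem hW, Matrix.one_mul]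

open scoped MatrixOrder Matrix.Norms.L2Operator in
theorem Matrix.PosSemidef.exists_eq_conjTranspose_mul_self {𝕜 n : Type*} [RCLike 𝕜] [Fintype n]
    [DecidableEq n] {M : Matrix n n 𝕜} (hM : M.PosSemidef) : ∃ B : Matrix n n 𝕜, M = Bᴴ * B :=
  CStarAlgebra.nonneg_iff_eq_star_mul_self.mp hM.nonneg

theorem IsStarProjection.re_trace_mul_conjTranspose_mul_self {R : Matrix (Fin d) (Fin d) ℂ}
    (hR : IsStarProjection R) (B : Matrix (Fin d) (Fin d) ℂ) :
    (R * (Bᴴ * B)).trace.re = frobNorm (R * Bᴴ) ^ 2 := by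
  have hRR : Rᴴ * R = R := by
    rw [← star_eq_conjTranspose, hR.isSelfAdjoint.star_eq, hR.isIdempotentElem.eq]
  rw [sq_frobNorm, conjTranspose_mul, conjTranspose_conjTranspose, Matrix.mul_assoc,
    ← Matrix.mul_assoc Rᴴ, hRR, trace_mul_comm, Matrix.mul_assoc, trace_mul_comm Bᴴ,
    Matrix.mul_assoc]

theorem IsStarProjection.re_trace_mul_nonneg {R M : Matrix (Fin d) (Fin d) ℂ}
    (hR : IsStarProjection R) (hM : M.PosSemidef) : 0 ≤ (R * M).trace.re := by
  obtain ⟨B, rfl⟩ := hM.exists_eq_conjTranspose_mul_self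
  rw [hR.re_trace_mul_conjTranspose_mul_self]
  positivity

theorem Matrix.PosSemidef.abs_re_trace_unitary_mul_proj_mul_proj_le
    {W R R' M : Matrix (Fin d) (Fin d) ℂ} (hM : M.PosSemidef) (hW : W ∈ unitary _)
    (hR : IsStarProjection R) (hR' : IsStarProjection R') :
    |(W * (R * M * R')).trace.re| ≤ √((R * M).trace.re) * √((R' * M).trace.re) := by
  obtain ⟨B, rfl⟩ := hM.exists_eq_conjTranspose_mul_self
  have htrace : (W * (R * (Bᴴ * B) * R')).trace = ((R' * Bᴴ)ᴴ * (W * (R * Bᴴ))).trace := by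
    rw [conjTranspose_mul, conjTranspose_conjTranspose, ← star_eq_conjTranspose R',
      hR'.isSelfAdjoint.star_eq]
    simp only [← Matrix.mul_assoc]
    rw [trace_mul_comm, ← Matrix.mul_assoc, trace_mul_comm]
    simp only [← Matrix.mul_assoc]
  rw [hR.re_trace_mul_conjTranspose_mul_self, hR'.re_trace_mul_conjTranspose_mul_self,
    Real.sqrt_sq (frobNorm_nonneg _), Real.sqrt_sq (frobNorm_nonneg _), htrace, mul_comm,
    ← frobNorm_unitary_mul hW (R * Bᴴ)]
  exact abs_re_trace_conjTranspose_mul_le _ _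

theorem nucNorm_eq_re_trace_cfc_sqrt (A : Matrix (Fin d) (Fin d) ℂ) :
    nucNorm A = (cfc Real.sqrt (Aᴴ * A)).trace.re := by
  rw [(posSemidef_conjTranspose_mul_self A).1.cfc_eq]
  rfl

namespace Matrix.IsHermitian

variable {X : Matrix (Fin d) (Fin d) ℂ} (hX : X.IsHermitian)
include hX

theorem posPart_eq_cfc : posPart hX = cfc (fun x : ℝ => max x 0) X := by
  rw [hX.cfc_eq]
  rfl

theorem negPart_eq_cfc : negPart hX = cfc (fun x : ℝ => max (-x) 0) X := by
  rw [hX.cfc_eq]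
  rfl

theorem posPart_sub_negPart : posPart hX - negPart hX = X := by
  rw [posPart_eq_cfc, negPart_eq_cfc,
    ← cfc_sub (fun x : ℝ => max x 0) (fun x => max (-x) 0) X]
  simp only [max_zero_sub_max_neg_zero_eq_self, cfc_id' ℝ X]

open scoped MatrixOrder in
theorem posSemidef_posPart : (posPart hX).PosSemidef := by
  rw [posPart_eq_cfc, ← nonneg_iff_posSemidef]
  exact cfc_nonneg fun x _ => le_max_right x 0

open scoped MatrixOrder in
theorem posSemidef_negPart : (negPart hX).PosSemidef := by
  rw [negPart_eq_cfc, ← nonneg_iff_posSemidef]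
  exact cfc_nonneg fun x _ => le_max_right (-x) 0

theorem nucNorm_eq_re_trace_cfc_abs : nucNorm X = (cfc (fun x : ℝ => |x|) X).trace.re := by
  have : cfc Real.sqrt (X ^ 2) = cfc (fun x : ℝ => |x|) X := by
    rw [← cfc_pow_id (R := ℝ) X 2, ← cfc_comp Real.sqrt _ X]
    exact cfc_congr fun x _ => Real.sqrt_sq_eq_abs x
  rw [nucNorm_eq_re_trace_cfc_sqrt, hX.eq, ← sq, this]

theorem nucNorm_eq_re_trace_posPart_add_re_trace_negPart :
    nucNorm X = (posPart hX).trace.re + (negPart hX).trace.re := by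
  rw [hX.nucNorm_eq_re_trace_cfc_abs, posPart_eq_cfc, negPart_eq_cfc, ← Complex.add_re,
    ← trace_add, ← cfc_add (a := X) (fun x : ℝ => max x 0) (fun x => max (-x) 0)]
  simp only [max_zero_add_max_neg_zero_eq_abs_self]

theorem exists_mem_unitary_nucNorm_eq_re_trace_mul :
    ∃ W ∈ unitary (Matrix (Fin d) (Fin d) ℂ), nucNorm X = (W * X).trace.re := by
  have hcont (f : ℝ → ℝ) : ContinuousOn f (spectrum ℝ X) := X.finite_real_spectrum.continuousOn f
  let sign : ℝ → ℝ := fun x => if 0 ≤ x then 1 else -1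
  refine ⟨cfc sign X, (cfc_unitary_iff sign X hX.isSelfAdjoint (hcont _)).mpr fun x _ => ?_, ?_⟩
  · by_cases hx : 0 ≤ x <;> simp [sign, hx]
  · have hmul : cfc sign X * X = cfc (fun x => sign x * x) X := by
      rw [cfc_mul sign (fun x => x) X (hcont _) (hcont _), cfc_id' ℝ X]
    rw [hX.nucNorm_eq_re_trace_cfc_abs, hmul]
    refine congrArg (fun M : Matrix (Fin d) (Fin d) ℂ => M.trace.re) (cfc_congr fun x _ => ?_)
    by_cases hx : 0 ≤ x
    · simp [sign, hx, abs_of_nonneg hx]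
    · simp [sign, hx, abs_of_neg (not_le.mp hx)]

theorem abs_re_trace_unitary_mul_proj_mul_proj_le {W R R' : Matrix (Fin d) (Fin d) ℂ}
    (hW : W ∈ unitary _) (hR : IsStarProjection R) (hR' : IsStarProjection R') :
    |(W * (R * X * R')).trace.re| ≤
      √((R * posPart hX).trace.re) * √((R' * posPart hX).trace.re) +
        √((R * negPart hX).trace.re) * √((R' * negPart hX).trace.re) := by
  conv_lhs => rw [← hX.posPart_sub_negPart, Matrix.mul_sub, Matrix.sub_mul, Matrix.mul_sub,
    trace_sub, Complex.sub_re]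
  exact (abs_sub _ _).trans <| add_le_add
    (hX.posSemidef_posPart.abs_re_trace_unitary_mul_proj_mul_proj_le hW hR hR')
    (hX.posSemidef_negPart.abs_re_trace_unitary_mul_proj_mul_proj_le hW hR hR')

theorem nucNorm_proj_mul_mul_proj_sub_le_blockwise {P : Matrix (Fin d) (Fin d) ℂ}
    (hP : IsStarProjection P) :
    nucNorm (P * X * P - X) ≤
      ((1 - P) * posPart hX).trace.re + ((1 - P) * negPart hX).trace.re +
        2 * (√((P * posPart hX).trace.re) * √(((1 - P) * posPart hX).trace.re) +
          √((P * negPart hX).trace.re) * √(((1 - P) * negPart hX).trace.re)) := by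
  have hQ := hP.one_sub
  have hE : (P * X * P - X).IsHermitian := by
    have hPXP := isHermitian_conjTranspose_mul_mul P hX
    rw [← star_eq_conjTranspose, hP.isSelfAdjoint.star_eq] at hPXP
    exact hPXP.sub hX
  obtain ⟨W, hW, hnuc⟩ := hE.exists_mem_unitary_nucNorm_eq_re_trace_mul
  have hblocks :
      P * X * P - X = -((1 - P) * X * (1 - P) + (1 - P) * X * P + P * X * (1 - P)) := by
    noncomm_ring
  rw [hnuc, hblocks, Matrix.mul_neg, trace_neg, Complex.neg_re, Matrix.mul_add, Matrix.mul_add,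
    trace_add, trace_add, Complex.add_re, Complex.add_re]
  have hQQ := abs_le.mp (hX.abs_re_trace_unitary_mul_proj_mul_proj_le hW hQ hQ)
  have hQP := abs_le.mp (hX.abs_re_trace_unitary_mul_proj_mul_proj_le hW hQ hP)
  have hPQ := abs_le.mp (hX.abs_re_trace_unitary_mul_proj_mul_proj_le hW hP hQ)
  rw [Real.mul_self_sqrt (hQ.re_trace_mul_nonneg hX.posSemidef_posPart),
    Real.mul_self_sqrt (hQ.re_trace_mul_nonneg hX.posSemidef_negPart)] at hQQ
  linarith [hQQ.1, hQP.1, hPQ.1]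

theorem nucNorm_proj_mul_mul_proj_sub_le {P : Matrix (Fin d) (Fin d) ℂ}
    (hP : IsStarProjection P) :
    nucNorm (P * X * P - X) ≤
      (nucNorm X - (P * X).trace.re) + 2 * √(nucNorm X) * √(nucNorm X - (P * X).trace.re) +
        (negPart hX).trace.re := by
  have hsplit (M : Matrix (Fin d) (Fin d) ℂ) :
      ((1 - P) * M).trace.re = M.trace.re - (P * M).trace.re := by
    rw [Matrix.sub_mul, Matrix.one_mul, trace_sub, Complex.sub_re]
  have hPX : (P * X).trace.re = (P * posPart hX).trace.re - (P * negPart hX).trace.re := by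
    rw [← Complex.sub_re, ← trace_sub, ← Matrix.mul_sub, hX.posPart_sub_negPart]
  have hPpos := hP.re_trace_mul_nonneg hX.posSemidef_posPart
  have hQpos := hP.one_sub.re_trace_mul_nonneg hX.posSemidef_posPart
  have hPneg := hP.re_trace_mul_nonneg hX.posSemidef_negPart
  have hQneg := hP.one_sub.re_trace_mul_nonneg hX.posSemidef_negPart
  have hbound := hX.nucNorm_proj_mul_mul_proj_sub_le_blockwise hP
  rw [hX.nucNorm_eq_re_trace_posPart_add_re_trace_negPart, hPX]
  simp only [hsplit] at hQpos hQneg hbound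
  set a := (posPart hX).trace.re
  set b := (negPart hX).trace.re
  set p := (P * posPart hX).trace.re
  set q := (P * negPart hX).trace.re
  have hamgm := two_mul_le_add_sq √q √(b - q)
  rw [Real.sq_sqrt hPneg, Real.sq_sqrt hQneg] at hamgm
  have hcross : √p * √(a - p) ≤ √(a + b) * √(a + b - (p - q)) := by
    gcongr <;> linarith
  linarith

end Matrix.IsHermitian

/-- There is a universal constant `C` such that: if `X` is Hermitian with `‖X‖₁ ≤ 1`
and `Tr(X⁻) ≤ δ`, and `P` is an orthogonal projection with `Tr(PX) ≥ ‖X‖₁ - δ`,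
for some `0 ≤ δ ≤ 1`, then `‖PXP - X‖₁ ≤ C √δ`. -/
theorem nucNorm_compress_le : ∃ C : ℝ, 0 < C ∧
    ∀ (d : ℕ) (X P : Matrix (Fin d) (Fin d) ℂ) (hX : X.IsHermitian)
      (δ : ℝ), 0 ≤ δ → δ ≤ 1 →
      Pᴴ = P → P * P = P →
      nucNorm X ≤ 1 →
      (negPart hX).trace.re ≤ δ →
      nucNorm X - δ ≤ (P * X).trace.re →
      nucNorm (P * X * P - X) ≤ C * Real.sqrt δ := by
  refine ⟨4, by norm_num, fun d X P hX δ _ hδ1 hP hPP hnuc hneg htr => ?_⟩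
  have hδ : δ ≤ √δ := Real.le_sqrt_self_iff.mpr hδ1
  calc nucNorm (P * X * P - X)
      ≤ (nucNorm X - (P * X).trace.re) + 2 * √(nucNorm X) * √(nucNorm X - (P * X).trace.re) +
          (negPart hX).trace.re := hX.nucNorm_proj_mul_mul_proj_sub_le ⟨hPP, hP⟩
    _ ≤ δ + 2 * 1 * √δ + δ := by
        gcongr
        · linarith
        · exact Real.sqrt_le_one.mpr hnuc
        · linarith
    _ ≤ 4 * √δ := by linarith
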